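/- Let G be a finite group, let K be a Carter subgroup of G, and let z ∈ Z(K) with z ≠ 1. Assume that any two Carter subgroups of C_G(z) are conjugate in C_G(z). Then the centralizer C_G(z) is self-normalizing in G: N_G(C_G(z)) = C_G(z). -/

import Mathlib

/-- A Carter subgroup of a group `G` is a nilpotent self-normalizing subgroup. -/
def IsCarterSubgroup {G : Type*} [Group G] (K : Subgroup G) : Prop :=
  Group.IsNilpotent K ∧ Subgroup.normalizer (K : Set _) = K

/-!
Frattini argument. Since `z` is central in `K`, the Carter subgroup `K` lies in `C = C_G(z)` and
is a Carter subgroup of `C`. For `g` normalizing `C`, the conjugate `gKg⁻¹` is again a Carter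
subgroup of `C`, hence `gKg⁻¹ = cKc⁻¹` for some `c ∈ C`. Then `c⁻¹g` normalizes `K`, so it lies
in `K ≤ C`, and `g ∈ C`.
-/

open Subgroup

namespace IsCarterSubgroup

variable {G N : Type*} [Group G] [Group N] {K : Subgroup G}

theorem map_equiv (hK : IsCarterSubgroup K) (f : G ≃* N) :
    IsCarterSubgroup (K.map f.toMonoidHom) :=
  have := hK.1
  ⟨Group.nilpotent_of_mulEquiv (K.equivMapOfInjective _ f.injective),
    by rw [← map_equiv_normalizer_eq, hK.2]⟩

theorem subgroupOf {C : Subgroup G} (hK : IsCarterSubgroup K) (hKC : K ≤ C) :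
    IsCarterSubgroup (K.subgroupOf C) :=
  have := hK.1
  ⟨Group.nilpotent_of_mulEquiv (subgroupOfEquivOfLe hKC).symm,
    by rw [← subgroupOf_normalizer_eq hKC, hK.2]⟩

end IsCarterSubgroup

namespace Subgroup

variable {G : Type*} [Group G] {K C : Subgroup G}

theorem map_subtype_map_conj_subgroupOf (hKC : K ≤ C) (c : C) :
    ((K.subgroupOf C).map (MulAut.conj c).toMonoidHom).map C.subtype =
      K.map (MulAut.conj (c : G)).toMonoidHom := by
  have hcomm : C.subtype.comp (MulAut.conj c).toMonoidHom =
      (MulAut.conj (c : G)).toMonoidHom.comp C.subtype := by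
    ext x
    simp
  rw [map_map, hcomm, ← map_map, subgroupOf_map_subtype, inf_eq_left.mpr hKC]

theorem map_conj_mul (a b : G) :
    K.map (MulAut.conj (a * b)).toMonoidHom =
      (K.map (MulAut.conj b).toMonoidHom).map (MulAut.conj a).toMonoidHom := by
  rw [map_map]
  congr 1
  ext
  simp [mul_assoc]

theorem mem_of_map_conj_eq_map_conj (hKC : K ≤ C) (hKN : normalizer (K : Set G) = K)
    {c g : G} (hc : c ∈ C) (hcg : K.map (MulAut.conj c).toMonoidHom =
      K.map (MulAut.conj g).toMonoidHom) : g ∈ C := by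
  have hnorm : c⁻¹ * g ∈ normalizer (K : Set G) := by
    refine mem_normalizer_iff_map_conj_eq.mpr
      (show K.map (MulAut.conj (c⁻¹ * g)).toMonoidHom = K from ?_)
    rw [map_conj_mul, ← hcg, ← map_conj_mul, inv_mul_cancel]
    ext
    simp
  have hK : c⁻¹ * g ∈ K := hKN ▸ hnorm
  simpa using C.mul_mem hc (hKC hK)

end Subgroup

theorem centralizer_self_normalizing_general {G : Type*} [Group G]
    (K : Subgroup G) (hK : IsCarterSubgroup K)
    (z : G) (hzc : ∀ k ∈ K, z * k = k * z)
    (hconj : ∀ K₁ K₂ : Subgroup ↥(Subgroup.centralizer {z}),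
      IsCarterSubgroup K₁ → IsCarterSubgroup K₂ →
      ∃ g : ↥(Subgroup.centralizer {z}), K₁.map (MulAut.conj g).toMonoidHom = K₂) :
    Subgroup.normalizer ((Subgroup.centralizer {z} : Subgroup G) : Set G) = Subgroup.centralizer {z} := by
  set C := centralizer ({z} : Set G)
  refine le_antisymm (fun g hg => ?_) le_normalizer
  have hKC : K ≤ C := fun k hk => mem_centralizer_singleton_iff.mpr (hzc k hk).symm
  have hgKC : K.map (MulAut.conj g).toMonoidHom ≤ C :=
    (map_mono hKC).trans_eq (mem_normalizer_iff_map_conj_eq.mp hg)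
  obtain ⟨c, hc⟩ := hconj _ _ (hK.subgroupOf hKC)
    ((hK.map_equiv (MulAut.conj g)).subgroupOf hgKC)
  refine mem_of_map_conj_eq_map_conj hKC hK.2 c.2 ?_
  rw [← map_subtype_map_conj_subgroupOf hKC, hc, subgroupOf_map_subtype, inf_eq_left.mpr hgKC]

/-- The centralizer of a nontrivial central element `z` of a Carter subgroup is
self-normalizing, provided Carter subgroups of `C_G(z)` are conjugate. -/
theorem centralizer_self_normalizing {G : Type*} [Group G] [Finite G]
    (K : Subgroup G) (hK : IsCarterSubgroup K)
    (z : G) (hz : z ≠ 1) (hzK : z ∈ K) (hzc : ∀ k ∈ K, z * k = k * z)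
    (hconj : ∀ K₁ K₂ : Subgroup ↥(Subgroup.centralizer {z}),
      IsCarterSubgroup K₁ → IsCarterSubgroup K₂ →
      ∃ g : ↥(Subgroup.centralizer {z}), K₁.map (MulAut.conj g).toMonoidHom = K₂) :
    Subgroup.normalizer ((Subgroup.centralizer {z} : Subgroup G) : Set G) = Subgroup.centralizer {z} :=
  centralizer_self_normalizing_general K hK z hzc hconj
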